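/- Let X be a simply-connected cell complex admitting an isoperimetric function f : ℕ → ℕ (every closed edge path P bounds a van Kampen diagram of area at most f(|P|)). Then FV_{X,ℤ}(n) ≤ f̄(n) for every n, where f̄ is the superadditive closure of f. -/

import Mathlib

open Finsupp

/-- A (combinatorial, oriented) graph: the 1-skeleton data of a complex. -/
structure CGraph where
  V : Type
  E : Type
  ends : E → V × V

/-- ℓ¹-norm of an integral chain. -/
def l1Z {α : Type} (c : α →₀ ℤ) : ℕ := c.sum fun _ v => v.natAbs

/-- Two chains are disjoint if no basis element has nonzero coefficient in both. -/
def DisjointChains {α : Type} (a b : α →₀ ℤ) : Prop := ∀ x, a x = 0 ∨ b x = 0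

namespace CGraph

variable (Γ : CGraph)

/-- Source vertex of a directed edge (an edge with an orientation bit). -/
def src (p : Γ.E × Bool) : Γ.V := if p.2 then (Γ.ends p.1).1 else (Γ.ends p.1).2

/-- Target vertex of a directed edge. -/
def tgt (p : Γ.E × Bool) : Γ.V := if p.2 then (Γ.ends p.1).2 else (Γ.ends p.1).1

/-- A nonempty cyclically-consecutive list of directed edges. -/
def IsClosedPath (l : List (Γ.E × Bool)) : Prop :=
  l ≠ [] ∧ ∀ i : Fin l.length,
    Γ.tgt (l.get i) = Γ.src (l.get ⟨(↑i + 1) % l.length, Nat.mod_lt _ i.pos⟩)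

/-- A circuit: a simple closed combinatorial path (no repeated edges or vertices). -/
def IsCircuit (l : List (Γ.E × Bool)) : Prop :=
  Γ.IsClosedPath l ∧ (l.map Prod.fst).Nodup ∧ (l.map Γ.src).Nodup

/-- The 1-cycle induced by a closed path: coefficient ±1 on each traversed edge. -/
noncomputable def pathCycle (l : List (Γ.E × Bool)) : Γ.E →₀ ℤ :=
  (l.map fun p => Finsupp.single p.1 (if p.2 then (1 : ℤ) else -1)).sum

/-- The simplicial boundary map `C₁ → C₀`. -/
noncomputable def d1 (γ : Γ.E →₀ ℤ) : Γ.V →₀ ℤ :=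
  γ.sum fun e c => c • (Finsupp.single (Γ.ends e).2 (1 : ℤ) - Finsupp.single (Γ.ends e).1 1)

/-- A 1-chain is a cycle if its boundary vanishes. -/
def IsCycle (γ : Γ.E →₀ ℤ) : Prop := Γ.d1 γ = 0

/-- A graph is fine if each edge lies in only finitely many circuits of each bounded length. -/
def Fine : Prop :=
  ∀ (e : Γ.E) (L : ℕ),
    {l : List (Γ.E × Bool) | Γ.IsCircuit l ∧ e ∈ l.map Prod.fst ∧ l.length ≤ L}.Finite

/-- Walks from `u` to `v`. -/
def IsWalk : List (Γ.E × Bool) → Γ.V → Γ.V → Prop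
  | [], u, v => u = v
  | p :: l, u, v => Γ.src p = u ∧ IsWalk l (Γ.tgt p) v

/-- Combinatorial distance in a graph (∞ if there is no walk). -/
noncomputable def gdist (u v : Γ.V) : ℕ∞ :=
  ⨅ l ∈ {l : List (Γ.E × Bool) | Γ.IsWalk l u v}, (l.length : ℕ∞)

def Connected : Prop := ∀ u v : Γ.V, Γ.gdist u v < ⊤

/-- Gromov hyperbolicity via the four-point condition. -/
def Hyperbolic : Prop :=
  ∃ δ : ℕ, ∀ x y z w : Γ.V,
    Γ.gdist x y + Γ.gdist z w ≤
      max (Γ.gdist x z + Γ.gdist y w) (Γ.gdist x w + Γ.gdist y z) + (δ : ℕ∞)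

end CGraph

/-- A combinatorial 2-complex: a graph together with a set of 2-cells, each with a
boundary 1-chain. -/
structure TwoComplex extends CGraph where
  F : Type
  fb : F → E →₀ ℤ

namespace TwoComplex

variable (X : TwoComplex)

/-- The boundary map `C₂ → C₁` over ℤ. -/
noncomputable def d2 (μ : X.F →₀ ℤ) : X.E →₀ ℤ := μ.sum fun f c => c • X.fb f

/-- The filling norm `‖γ‖_∂` over ℤ (∞ if `γ` bounds no 2-chain). -/
noncomputable def fillNorm (γ : X.E →₀ ℤ) : ℕ∞ :=
  ⨅ μ ∈ {μ : X.F →₀ ℤ | X.d2 μ = γ}, (l1Z μ : ℕ∞)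

/-- The homological Dehn function of `X` over ℤ. -/
noncomputable def FV (k : ℕ) : ℕ∞ :=
  ⨆ γ ∈ {γ : X.E →₀ ℤ | X.toCGraph.IsCycle γ ∧ l1Z γ ≤ k}, X.fillNorm γ

end TwoComplex

/-- The superadditive closure of `g`: the maximum of `g n₁ + ⋯ + g n_k` over all
partitions `n₁ + ⋯ + n_k = n` into positive parts. -/
noncomputable def superadditiveClosure (g : ℕ → ℕ) (n : ℕ) : ℕ :=
  sSup {m : ℕ | ∃ l : List ℕ, (∀ x ∈ l, 0 < x) ∧ l.sum = n ∧ (l.map g).sum = m}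

/-!
A nonzero integral 1-cycle `γ` contains a closed path running along it: every edge is traversed
in the direction of the sign of its coefficient, and no edge twice. Indeed, flow conservation lets
one keep walking along `γ`, and as `γ` has finite support the walk eventually runs around a
periodic orbit. Subtracting that path lowers `‖γ‖₁` by exactly its length, so `γ` is a sum of
closed paths whose lengths add up to `‖γ‖₁`. Filling each of them by a 2-chain of norm at most
`f` of its length bounds `‖γ‖_∂` by `f n₁ + ⋯ + f n_k` with `n₁ + ⋯ + n_k = ‖γ‖₁ ≤ n`, and a
last part `n - ‖γ‖₁` turns this into a partition of `n`.
-/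

section L1Norm

variable {α : Type}

lemma l1Z_eq_sum_of_support_subset (c : α →₀ ℤ) {s : Finset α} (h : c.support ⊆ s) :
    l1Z c = ∑ x ∈ s, (c x).natAbs :=
  sum_of_support_subset c h _ (by simp)

lemma l1Z_single (x : α) (k : ℤ) : l1Z (single x k) = k.natAbs :=
  sum_single_index (by simp)

lemma l1Z_add_le (a b : α →₀ ℤ) : l1Z (a + b) ≤ l1Z a + l1Z b := by
  classical
  rw [l1Z_eq_sum_of_support_subset (a + b) support_add,
    l1Z_eq_sum_of_support_subset a Finset.subset_union_left,
    l1Z_eq_sum_of_support_subset b Finset.subset_union_right, ← Finset.sum_add_distrib]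
  exact Finset.sum_le_sum fun x _ => (a x).natAbs_add_le (b x)

lemma l1Z_sub_add_of_natAbs {a b : α →₀ ℤ}
    (h : ∀ x, (a x - b x).natAbs + (b x).natAbs = (a x).natAbs) :
    l1Z (a - b) + l1Z b = l1Z a := by
  classical
  rw [l1Z_eq_sum_of_support_subset (a - b) support_sub,
    l1Z_eq_sum_of_support_subset b Finset.subset_union_right,
    l1Z_eq_sum_of_support_subset a Finset.subset_union_left, ← Finset.sum_add_distrib]
  exact Finset.sum_congr rfl fun x _ => h x

end L1Norm

theorem Function.exists_mem_periodicPts {α : Type*} [Finite α] (f : α → α) (x : α) :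
    ∃ y, y ∈ periodicPts f := by
  obtain ⟨m, n, heq, hlt⟩ : ∃ m n, f^[m] x = f^[n] x ∧ m < n := by
    obtain ⟨m, n, heq, hne⟩ : ∃ m n, f^[m] x = f^[n] x ∧ m ≠ n := by
      simpa [Function.Injective] using not_injective_infinite_finite (f^[·] x)
    rcases hne.lt_or_gt with h | h
    exacts [⟨m, n, heq, h⟩, ⟨n, m, heq.symm, h⟩]
  refine ⟨f^[m] x, mk_mem_periodicPts (Nat.sub_pos_of_lt hlt) ?_⟩
  rw [IsPeriodicPt, IsFixedPt, ← iterate_add_apply, Nat.sub_add_cancel hlt.le, heq]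

namespace CGraph

open Function

variable {Γ : CGraph}

lemma d1_eq_linearCombination :
    Γ.d1 = linearCombination ℤ fun e => single (Γ.ends e).2 1 - single (Γ.ends e).1 1 :=
  funext fun γ => (linearCombination_apply ℤ γ).symm

lemma d1_add (a b : Γ.E →₀ ℤ) : Γ.d1 (a + b) = Γ.d1 a + Γ.d1 b := by
  simp only [d1_eq_linearCombination, map_add]

lemma d1_sub (a b : Γ.E →₀ ℤ) : Γ.d1 (a - b) = Γ.d1 a - Γ.d1 b := by
  simp only [d1_eq_linearCombination, map_sub]

lemma d1_apply (γ : Γ.E →₀ ℤ) (v : Γ.V) :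
    Γ.d1 γ v = ∑ e ∈ γ.support, γ e * (single (Γ.ends e).2 1 v - single (Γ.ends e).1 1 v) := by
  simp [d1, Finsupp.sum, finsetSum_apply]

lemma pathCycle_cons (p : Γ.E × Bool) (l : List (Γ.E × Bool)) :
    Γ.pathCycle (p :: l) = single p.1 (if p.2 then 1 else -1) + Γ.pathCycle l := by
  simp [pathCycle]

lemma d1_pathCycle (l : List (Γ.E × Bool)) :
    Γ.d1 (Γ.pathCycle l) = (l.map fun p => single (Γ.tgt p) 1 - single (Γ.src p) 1).sum := by
  induction l with
  | nil => simp [pathCycle, d1]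
  | cons p l ih =>
    rw [pathCycle_cons, d1_add, ih, List.map_cons, List.sum_cons, d1_eq_linearCombination,
      linearCombination_single]
    rcases p with ⟨e, _ | _⟩ <;> simp [src, tgt]

theorem IsClosedPath.d1_pathCycle_eq_zero {l : List (Γ.E × Bool)} (hl : Γ.IsClosedPath l) :
    Γ.d1 (Γ.pathCycle l) = 0 := by
  have : NeZero l.length := ⟨by simpa using hl.1⟩
  have hrot (i : Fin l.length) : Γ.tgt l[i.1] = Γ.src l[(i + 1 : Fin l.length).1] := by
    simpa [Fin.val_add, Nat.add_mod] using hl.2 i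
  rw [d1_pathCycle, ← Fin.sum_univ_fun_getElem, Finset.sum_sub_distrib, sub_eq_zero]
  simp_rw [hrot]
  exact Equiv.sum_comp (Equiv.addRight (1 : Fin l.length)) fun i => single (Γ.src l[i.1]) (1 : ℤ)

def Along {E : Type} (γ : E →₀ ℤ) (p : E × Bool) : Prop :=
  if p.2 then 0 < γ p.1 else γ p.1 < 0

section Along

variable {E : Type} {γ : E →₀ ℤ} {p p' : E × Bool}

@[simp]
lemma along_true_iff {e : E} : Along γ (e, true) ↔ 0 < γ e := Iff.rfl

@[simp]
lemma along_false_iff {e : E} : Along γ (e, false) ↔ γ e < 0 := Iff.rfl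

lemma exists_along_of_ne_zero (hγ : γ ≠ 0) : ∃ p, Along γ p := by
  obtain ⟨e, he⟩ := Finsupp.ne_iff.mp hγ
  rcases (he : γ e ≠ 0).lt_or_gt with h | h
  exacts [⟨(e, false), h⟩, ⟨(e, true), h⟩]

lemma Along.mem_support (h : Along γ p) : p.1 ∈ γ.support := by
  rcases p with ⟨e, _ | _⟩ <;> simp only [along_true_iff, along_false_iff] at h <;> simp <;> omega

lemma Along.eq_of_fst_eq (h : Along γ p) (h' : Along γ p') (hfst : p.1 = p'.1) : p = p' := by
  rcases p with ⟨e, _ | _⟩ <;> rcases p' with ⟨e', _ | _⟩ <;> obtain rfl : e = e' := hfst <;>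
    simp only [along_true_iff, along_false_iff] at h h' <;> first | rfl | omega

lemma Along.sub_single {e : E} {k : ℤ} (h : Along γ p) (he : p.1 ≠ e) :
    Along (γ - single e k) p := by
  rcases p with ⟨e', _ | _⟩ <;> simpa [single_apply, Ne.symm he] using h

lemma Along.l1Z_sub_single_add_one (h : Along γ p) :
    l1Z (γ - single p.1 (if p.2 then 1 else -1)) + 1 = l1Z γ := by
  classical
  have hunit : l1Z (single p.1 (if p.2 then 1 else -1)) = 1 := by
    rw [l1Z_single]; split_ifs <;> rfl
  rw [← hunit]
  refine l1Z_sub_add_of_natAbs fun x => ?_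
  rcases eq_or_ne p.1 x with rfl | hx
  · rcases p with ⟨e, _ | _⟩ <;> simp only [along_true_iff, along_false_iff] at h <;> simp <;> omega
  · simp [hx]

end Along

theorem exists_along_src_eq_tgt {γ : Γ.E →₀ ℤ} (hγ : Γ.IsCycle γ) {p : Γ.E × Bool}
    (hp : Along γ p) : ∃ p', Along γ p' ∧ Γ.src p' = Γ.tgt p := by
  classical
  by_contra! hout
  set v := Γ.tgt p
  -- otherwise every edge of `γ` at `v` points into `v`, and `∂γ` would be positive at `v`
  have hleave (e : Γ.E) : (0 < γ e → (Γ.ends e).1 ≠ v) ∧ (γ e < 0 → (Γ.ends e).2 ≠ v) :=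
    ⟨fun h => hout (e, true) h, fun h => hout (e, false) h⟩
  have hflux (e : Γ.E) : 0 ≤ γ e * (single (Γ.ends e).2 1 v - single (Γ.ends e).1 1 v) := by
    rcases lt_trichotomy (γ e) 0 with h | h | h
    · simp only [single_apply, (hleave e).2 h, if_false]
      split_ifs <;> omega
    · simp [h]
    · simp only [single_apply, (hleave e).1 h, if_false]
      split_ifs <;> omega
  have hflux_pos : 0 < γ p.1 * (single (Γ.ends p.1).2 1 v - single (Γ.ends p.1).1 1 v) := by
    rcases p with ⟨e, _ | _⟩
    · have hin : (Γ.ends e).1 = v := rfl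
      simp only [single_apply, hin, (hleave e).2 hp, if_true, if_false]
      simpa using hp
    · have hin : (Γ.ends e).2 = v := rfl
      simp only [single_apply, hin, (hleave e).1 hp, if_true, if_false]
      simpa using hp
  have hpos := Finset.sum_pos' (fun e _ => hflux e) ⟨p.1, hp.mem_support, hflux_pos⟩
  rw [← d1_apply, hγ] at hpos
  exact hpos.false

theorem isClosedPath_map_iterate {α : Type*} {g : α → α} {φ : α → Γ.E × Bool}
    (hφ : ∀ a, Γ.src (φ (g a)) = Γ.tgt (φ a)) {x : α} {n : ℕ} (hn : 0 < n)
    (hx : IsPeriodicPt g n x) : Γ.IsClosedPath ((List.range n).map fun k => φ (g^[k] x)) := by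
  refine ⟨by simpa using hn.ne', fun i => ?_⟩
  simp only [List.get_eq_getElem, List.getElem_map, List.getElem_range, List.length_map,
    List.length_range, hx.iterate_mod_apply, iterate_succ_apply', hφ]

theorem exists_isClosedPath_along {γ : Γ.E →₀ ℤ} (hγ : Γ.IsCycle γ) (hne : γ ≠ 0) :
    ∃ l : List (Γ.E × Bool), Γ.IsClosedPath l ∧ (l.map Prod.fst).Nodup ∧ ∀ p ∈ l, Along γ p := by
  obtain ⟨p₀, hp₀⟩ := exists_along_of_ne_zero hne
  choose next hnext using fun p : {p // Along γ p} => exists_along_src_eq_tgt hγ p.2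
  let g (p : {p // Along γ p}) : {p // Along γ p} := ⟨next p, (hnext p).1⟩
  have hfst : Injective fun p : {p // Along γ p} => p.1.1 :=
    fun p q h => Subtype.ext (p.2.eq_of_fst_eq q.2 h)
  have : Finite {p // Along γ p} :=
    Finite.of_injective (fun p => (⟨p.1.1, p.2.mem_support⟩ : γ.support))
      fun p q h => hfst (congrArg Subtype.val h)
  obtain ⟨x, hx⟩ := exists_mem_periodicPts g ⟨p₀, hp₀⟩
  refine ⟨(List.range (minimalPeriod g x)).map fun k => (g^[k] x).1,
    isClosedPath_map_iterate (fun p => (hnext p).2) (minimalPeriod_pos_of_mem_periodicPts hx)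
      (isPeriodicPt_minimalPeriod g x), ?_, ?_⟩
  · rw [List.map_map]
    refine List.nodup_range.map_on fun a ha b hb hab => ?_
    exact iterate_injOn_Iio_minimalPeriod (by simpa using ha) (by simpa using hb) (hfst hab)
  · simp only [List.mem_map]
    rintro _ ⟨k, -, rfl⟩
    exact (g^[k] x).2

theorem l1Z_sub_pathCycle_add_length {γ : Γ.E →₀ ℤ} {l : List (Γ.E × Bool)}
    (hl : (l.map Prod.fst).Nodup) (hγ : ∀ p ∈ l, Along γ p) :
    l1Z (γ - Γ.pathCycle l) + l.length = l1Z γ := by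
  induction l generalizing γ with
  | nil => simp [pathCycle]
  | cons p l ih =>
    rw [List.map_cons, List.nodup_cons, List.mem_map] at hl
    have htail : ∀ p' ∈ l, Along (γ - single p.1 (if p.2 then 1 else -1)) p' :=
      fun p' hp' => (hγ p' (List.mem_cons_of_mem p hp')).sub_single
        fun h => hl.1 ⟨p', hp', h⟩
    have htail_norm := ih hl.2 htail
    rw [pathCycle_cons, List.length_cons, ← (hγ p List.mem_cons_self).l1Z_sub_single_add_one,
      sub_add_eq_sub_sub]
    omega

theorem exists_isClosedPath_decomposition {γ : Γ.E →₀ ℤ} (hγ : Γ.IsCycle γ) :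
    ∃ L : List (List (Γ.E × Bool)), (∀ l ∈ L, Γ.IsClosedPath l) ∧
      (L.map Γ.pathCycle).sum = γ ∧ (L.map List.length).sum = l1Z γ := by
  induction hn : l1Z γ using Nat.strong_induction_on generalizing γ with
  | _ n ih =>
  by_cases h0 : γ = 0
  · exact ⟨[], by simp, by simp [h0], by simp [← hn, h0, l1Z]⟩
  obtain ⟨l, hl, hnodup, halong⟩ := exists_isClosedPath_along hγ h0
  have hnorm := l1Z_sub_pathCycle_add_length hnodup halong
  have hcycle : Γ.IsCycle (γ - Γ.pathCycle l) := by
    rw [IsCycle, d1_sub, hγ, hl.d1_pathCycle_eq_zero, sub_zero]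
  have hpos : 0 < l.length := List.length_pos_iff.mpr hl.1
  obtain ⟨L, hL, hsum, hlen⟩ := ih _ (by omega) hcycle rfl
  refine ⟨l :: L, ?_, by simp [hsum], by simp [hlen]; omega⟩
  simpa [hl] using hL

end CGraph

namespace TwoComplex

variable {X : TwoComplex}

lemma d2_eq_linearCombination : X.d2 = linearCombination ℤ X.fb :=
  funext fun μ => (linearCombination_apply ℤ μ).symm

lemma fillNorm_le_of_d2_eq {μ : X.F →₀ ℤ} {γ : X.E →₀ ℤ} (h : X.d2 μ = γ) :
    X.fillNorm γ ≤ l1Z μ :=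
  iInf₂_le μ h

theorem exists_d2_eq_sum_pathCycle {f : ℕ → ℕ}
    (hiso : ∀ l : List (X.E × Bool), X.toCGraph.IsClosedPath l →
      ∃ μ : X.F →₀ ℤ, X.d2 μ = X.toCGraph.pathCycle l ∧ l1Z μ ≤ f l.length)
    {L : List (List (X.E × Bool))} (hL : ∀ l ∈ L, X.toCGraph.IsClosedPath l) :
    ∃ μ : X.F →₀ ℤ, X.d2 μ = (L.map X.toCGraph.pathCycle).sum ∧
      l1Z μ ≤ (L.map fun l => f l.length).sum := by
  induction L with
  | nil => exact ⟨0, by simp [d2_eq_linearCombination], by simp [l1Z]⟩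
  | cons l L ih =>
    obtain ⟨μ₀, hμ₀, hμ₀f⟩ := hiso l (hL l List.mem_cons_self)
    obtain ⟨μ, hμ, hμf⟩ := ih fun l' hl' => hL l' (List.mem_cons_of_mem l hl')
    refine ⟨μ₀ + μ, ?_, ?_⟩
    · rw [d2_eq_linearCombination, map_add, ← d2_eq_linearCombination, hμ₀, hμ]
      simp
    · simpa using (l1Z_add_le μ₀ μ).trans (add_le_add hμ₀f hμf)

end TwoComplex

theorem sum_map_le_superadditiveClosure (g : ℕ → ℕ) {n : ℕ} {l : List ℕ}
    (hpos : ∀ x ∈ l, 0 < x) (hsum : l.sum = n) : (l.map g).sum ≤ superadditiveClosure g n := by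
  -- the candidate sums are indexed by the finitely many compositions of `n`
  have hbdd : BddAbove
      {m : ℕ | ∃ l : List ℕ, (∀ x ∈ l, 0 < x) ∧ l.sum = n ∧ (l.map g).sum = m} := by
    refine ((Set.finite_range fun c : Composition n => (c.blocks.map g).sum).subset ?_).bddAbove
    rintro m ⟨l, hpos, hsum, rfl⟩
    exact ⟨⟨l, hpos _, hsum⟩, rfl⟩
  exact le_csSup hbdd ⟨l, hpos, hsum, rfl⟩

theorem sum_map_le_superadditiveClosure_of_sum_le (g : ℕ → ℕ) {n : ℕ} {l : List ℕ}
    (hpos : ∀ x ∈ l, 0 < x) (hsum : l.sum ≤ n) : (l.map g).sum ≤ superadditiveClosure g n := by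
  rcases hsum.eq_or_lt with heq | hlt
  · exact sum_map_le_superadditiveClosure g hpos heq
  · calc (l.map g).sum ≤ ((l ++ [n - l.sum]).map g).sum := by simp
      _ ≤ superadditiveClosure g n := by
        refine sum_map_le_superadditiveClosure g ?_ (by simp; omega)
        simpa [or_imp, forall_and, hlt] using hpos

theorem FV_le_superadditive_closure_general (X : TwoComplex) (f : ℕ → ℕ)
    (hiso : ∀ l : List (X.E × Bool), X.toCGraph.IsClosedPath l →
      ∃ μ : X.F →₀ ℤ, X.d2 μ = X.toCGraph.pathCycle l ∧ l1Z μ ≤ f l.length) :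
    ∀ n : ℕ, X.FV n ≤ (superadditiveClosure f n : ℕ∞) := by
  intro n
  refine iSup₂_le fun γ ⟨hγ, hγn⟩ => ?_
  obtain ⟨L, hL, rfl, hlen⟩ := CGraph.exists_isClosedPath_decomposition hγ
  obtain ⟨μ, hμ, hμf⟩ := TwoComplex.exists_d2_eq_sum_pathCycle hiso hL
  have hparts : ∀ k ∈ L.map List.length, 0 < k := by
    simpa using fun l hl => List.length_pos_iff.mpr (hL l hl).1
  have hclosure := sum_map_le_superadditiveClosure_of_sum_le f hparts (hlen.trans_le hγn)
  rw [List.map_map] at hclosure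
  exact (TwoComplex.fillNorm_le_of_d2_eq hμ).trans (mod_cast hμf.trans hclosure)

/-- If every closed edge path P of X bounds a 2-chain of norm at most
f(|P|) (as furnished by van Kampen diagrams of area ≤ f(|P|) in a simply connected
complex with isoperimetric function f), then FV_{X,ℤ}(n) ≤ f̄(n), the superadditive
closure of f. -/
theorem FV_le_superadditive_closure (X : TwoComplex) (f : ℕ → ℕ) (hmono : Monotone f)
    (hiso : ∀ l : List (X.E × Bool), X.toCGraph.IsClosedPath l →
      ∃ μ : X.F →₀ ℤ, X.d2 μ = X.toCGraph.pathCycle l ∧ l1Z μ ≤ f l.length) :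
    ∀ n : ℕ, X.FV n ≤ (superadditiveClosure f n : ℕ∞) :=
  FV_le_superadditive_closure_general X f hiso
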